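/- arXiv:1406.2270 — 3 statements merged into one kernel-verified Lean document; each statement's English description precedes it below -/
import Mathlib

section
/- Let L/K be a finite Galois extension of fields of degree n with Galois group {σ₁, σ₂, …, σₙ}. Then there exists an element ω ∈ L such that the n × n matrix with (i, j)-entry σᵢ⁻¹(σⱼ(ω)) has nonzero determinant. -/
open Polynomial Matrix

section LemmaA

variable {K L : Type*} [Field K] [Field L] [Algebra K L]
  [FiniteDimensional K L] [IsGalois K L] [DecidableEq (L ≃ₐ[K] L)]

/-- If the Galois orbit of `ω` is linearly independent over `K`, the determinant is nonzero. -/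
theorem detA (ω : L) (h : LinearIndependent K (fun τ : L ≃ₐ[K] L => τ ω)) :
    (Matrix.of fun σ τ : L ≃ₐ[K] L => σ⁻¹ (τ ω)).det ≠ 0 := by
  classical
  intro hdet
  obtain ⟨v, hv0, hv⟩ := (Matrix.exists_vecMul_eq_zero_iff).2 hdet
  -- the basis given by the orbit
  have hcard : Fintype.card (L ≃ₐ[K] L) = Module.finrank K L :=
    Nat.card_eq_fintype_card (α := L ≃ₐ[K] L) ▸ IsGalois.card_aut_eq_finrank K L
  let b : Module.Basis (L ≃ₐ[K] L) K L := basisOfLinearIndependentOfCardEqFinrank h hcard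
  have hb : ∀ τ : L ≃ₐ[K] L, b τ = τ ω := fun τ => by
    simp [b, coe_basisOfLinearIndependentOfCardEqFinrank]
  -- the linear map ∑ σ, v σ⁻¹ • σ
  let F : L →ₗ[K] L := ∑ σ : L ≃ₐ[K] L, v σ⁻¹ • (σ : L →ₐ[K] L).toLinearMap
  have hF : F = 0 := by
    apply b.ext
    intro τ
    have := congrFun hv τ
    simp only [Matrix.vecMul, dotProduct, Matrix.of_apply, Pi.zero_apply] at this
    simp only [F, hb, LinearMap.sum_apply, LinearMap.smul_apply, AlgHom.toLinearMap_apply,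
      LinearMap.zero_apply, smul_eq_mul]
    rw [← this]
    exact Fintype.sum_equiv (Equiv.inv _) _ _ (fun σ => by simp)
  have hindep : LinearIndependent L
      (fun σ : L ≃ₐ[K] L => (σ : L →ₐ[K] L).toLinearMap) :=
    (linearIndependent_algHom_toLinearMap K L L).comp _ AlgEquiv.coe_algHom_injective
  have : ∀ σ : L ≃ₐ[K] L, v σ⁻¹ = 0 := by
    intro σ
    exact Fintype.linearIndependent_iff.mp hindep (fun σ => v σ⁻¹) hF σ
  apply hv0
  funext σ
  simpa using this σ⁻¹

end LemmaA

section NormalBasis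

variable (K L : Type*) [Field K] [Field L] [Algebra K L] [FiniteDimensional K L]

theorem exists_frobenius [Fintype K] :
    ∃ φ : L ≃ₐ[K] L, orderOf φ = Module.finrank K L := by
  classical
  haveI : Finite L := Module.finite_of_finite K
  haveI : Fintype L := Fintype.ofFinite L
  set p := ringChar K with hpdef
  haveI : CharP K p := ringChar.charP K
  have hp : p.Prime := CharP.char_is_prime K p
  haveI := Fact.mk hp
  haveI : CharP L p := charP_of_injective_algebraMap (algebraMap K L).injective p
  obtain ⟨k, -, hcard⟩ := FiniteField.card K p
  have hq2 : 2 ≤ Fintype.card K := Fintype.one_lt_card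
  let ψ : L →ₐ[K] L :=
  { toRingHom := iterateFrobenius L p k
    commutes' := fun c => by
      show iterateFrobenius L p k (algebraMap K L c) = algebraMap K L c
      rw [iterateFrobenius_def, ← map_pow, ← hcard, FiniteField.pow_card] }
  have hψ : ∀ x : L, ψ x = x ^ Fintype.card K := fun x => by
    show iterateFrobenius L p k x = x ^ Fintype.card K
    rw [iterateFrobenius_def, hcard]
  have hbij : Function.Bijective ψ :=
    Finite.injective_iff_bijective.mp ψ.toRingHom.injective
  refine ⟨AlgEquiv.ofBijective ψ hbij, ?_⟩
  set φ := AlgEquiv.ofBijective ψ hbij with hφdef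
  have hφ : ∀ x : L, φ x = x ^ Fintype.card K := hψ
  have hpow : ∀ (j : ℕ) (x : L), (φ ^ j) x = x ^ Fintype.card K ^ j := by
    intro j
    induction j with
    | zero => intro x; simp
    | succ j ih =>
      intro x
      rw [pow_succ, AlgEquiv.mul_apply, ih, hφ, ← pow_mul, ← pow_succ']
  set n := Module.finrank K L with hn
  have hLcard : Fintype.card L = Fintype.card K ^ n := Module.card_eq_pow_finrank
  have hn0 : 0 < n := Module.finrank_pos
  have hφn : φ ^ n = 1 := by
    ext x
    rw [hpow n x, ← hLcard]
    exact FiniteField.pow_card x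
  have hdvd : orderOf φ ∣ n := orderOf_dvd_of_pow_eq_one hφn
  have hle : n ≤ orderOf φ := by
    by_contra hlt
    push_neg at hlt
    set j := orderOf φ with hj
    have hj0 : 0 < j := orderOf_pos φ
    have hroots : ∀ x : L, x ^ Fintype.card K ^ j = x := by
      intro x
      have := congrArg (fun (g : L ≃ₐ[K] L) => g x) (pow_orderOf_eq_one φ)
      rw [← hpow j x]; exact this
    set P : L[X] := X ^ Fintype.card K ^ j - X with hP
    have h2 : 2 ≤ Fintype.card K ^ j := le_trans hq2 (Nat.le_self_pow hj0.ne' _)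
    have hdeg : P.natDegree = Fintype.card K ^ j := by
      rw [hP]
      rw [natDegree_sub_eq_left_of_natDegree_lt] <;>
        simp [natDegree_X_pow, Nat.lt_of_lt_of_le one_lt_two h2]
    have hPne : P ≠ 0 := by
      intro h
      rw [h, natDegree_zero] at hdeg
      omega
    have hsub : (Finset.univ : Finset L) ⊆ P.roots.toFinset := by
      intro x _
      rw [Multiset.mem_toFinset, mem_roots hPne]
      simp [hP, IsRoot, hroots x, sub_self]
    have hcardle : Fintype.card L ≤ Fintype.card K ^ j := by
      calc Fintype.card L = (Finset.univ : Finset L).card := (Finset.card_univ).symm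
        _ ≤ P.roots.toFinset.card := Finset.card_le_card hsub
        _ ≤ Multiset.card P.roots := Multiset.toFinset_card_le _
        _ ≤ P.natDegree := P.card_roots'
        _ = Fintype.card K ^ j := hdeg
    rw [hLcard] at hcardle
    exact absurd hcardle (not_le.mpr (Nat.pow_lt_pow_right (by omega) hlt))
  exact le_antisymm (Nat.le_of_dvd hn0 hdvd) hle


/-- Normal basis theorem, finite field case: some Galois orbit is linearly independent. -/
theorem finite_normal_basis [IsGalois K L] [Finite K] :
    ∃ ω : L, LinearIndependent K (fun τ : L ≃ₐ[K] L => τ ω) := by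
  classical
  haveI : Fintype K := Fintype.ofFinite K
  obtain ⟨φ, hord⟩ := exists_frobenius K L
  set n := Module.finrank K L with hn
  have hn0 : 0 < n := Module.finrank_pos
  set f := φ.toLinearMap with hf
  set m : K[X] := X ^ n - C 1 with hmdef
  have hmin : minpoly K f = m := by
    rw [hf, minpoly_algEquiv_toLinearMap φ (isOfFinOrder_of_finite φ), hord]
  have hm_monic : m.Monic := monic_X_pow_sub_C 1 hn0.ne'
  have hm0 : m ≠ 0 := hm_monic.ne_zero
  have hmdeg : m.natDegree = n := natDegree_X_pow_sub_C
  have aeval0 : aeval f m = 0 := by rw [← hmin]; exact minpoly.aeval K f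
  have hdvd : ∀ p : K[X], aeval f p = 0 → m ∣ p := fun p hp => hmin ▸ minpoly.dvd K f hp
  have NV : ∀ p : K[X], p ≠ 0 → p.natDegree < n → aeval f p ≠ 0 := by
    intro p h0 hlt hz
    have h1 := Polynomial.natDegree_le_of_dvd (hdvd p hz) h0
    omega
  have kill : ∀ (t : K[X]) (x : L), m ∣ t → aeval f t x = 0 := by
    rintro t x ⟨s, rfl⟩
    rw [_root_.map_mul, aeval0, zero_mul]
    rfl
  have comp : ∀ (a b : K[X]) (x : L), aeval f (a * b) x = aeval f a (aeval f b x) := by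
    intro a b x
    rw [_root_.map_mul]
    rfl
  -- factorization data
  set s := UniqueFactorizationMonoid.normalizedFactors m with hs
  have hsprod : s.prod = m := by
    refine Polynomial.eq_of_monic_of_associated ?_ hm_monic
      (UniqueFactorizationMonoid.prod_normalizedFactors hm0)
    have : ∀ p ∈ s, p.Monic := by
      intro p hp
      have h1 : normalize p = p := UniqueFactorizationMonoid.normalize_normalized_factor p hp
      have h2 : p ≠ 0 := (UniqueFactorizationMonoid.prime_of_normalized_factor p hp).ne_zero
      rw [← h1]
      exact Polynomial.monic_normalize h2
    have := Polynomial.monic_multiset_prod_of_monic s id (fun p hp => this p hp)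
    simpa using this
  set T := s.toFinset with hT
  set e : K[X] → ℕ := fun p => s.count p with he
  have hmT : ∏ p ∈ T, p ^ e p = m := by
    rw [← hsprod, Finset.prod_multiset_count]
  -- basic facts about each prime factor
  have hprime : ∀ p ∈ T, Prime p := fun p hp =>
    UniqueFactorizationMonoid.prime_of_normalized_factor p (Multiset.mem_toFinset.mp hp)
  have hnorm : ∀ p ∈ T, normalize p = p := fun p hp =>
    UniqueFactorizationMonoid.normalize_normalized_factor p (Multiset.mem_toFinset.mp hp)
  have hne : ∀ p ∈ T, ∀ p' ∈ T, p ∣ p' → p = p' := by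
    intro p hp p' hp' hdvd'
    have hassoc := (hprime p hp).associated_of_dvd (hprime p' hp') hdvd'
    have := normalize_eq_normalize hassoc.dvd hassoc.symm.dvd
    rwa [hnorm p hp, hnorm p' hp'] at this
  have he1 : ∀ p ∈ T, 1 ≤ e p := fun p hp =>
    Multiset.count_pos.mpr (Multiset.mem_toFinset.mp hp)
  have hpdeg : ∀ p ∈ T, 0 < p.natDegree := by
    intro p hp
    rcases Nat.eq_zero_or_pos p.natDegree with h | h
    case inr => exact h
    · exfalso
      obtain ⟨a, ha⟩ := Polynomial.natDegree_eq_zero.mp h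
      have ha0 : a ≠ 0 := by
        rintro rfl; exact (hprime p hp).ne_zero (by simp [← ha])
      exact (hprime p hp).not_unit (ha ▸ (Polynomial.isUnit_C.mpr (isUnit_iff_ne_zero.mpr ha0)))
  set c : K[X] → K[X] := fun p => ∏ p' ∈ T.erase p, p' ^ e p' with hc
  have hc0 : ∀ p, c p ≠ 0 := by
    intro p
    refine Finset.prod_ne_zero_iff.mpr fun p' hp' => ?_
    exact pow_ne_zero _ (hprime p' (Finset.mem_of_mem_erase hp')).ne_zero
  have hmfac : ∀ p ∈ T, p ^ e p * c p = m := by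
    intro p hp
    show p ^ e p * ∏ p' ∈ T.erase p, p' ^ e p' = m
    rw [← hmT, Finset.mul_prod_erase T (fun q => q ^ e q) hp]
  have hpnotdvdc : ∀ p ∈ T, ¬ p ∣ c p := by
    intro p hp hdvd'
    obtain ⟨p', hp', hdp'⟩ := Prime.exists_mem_finset_dvd (hprime p hp) hdvd'
    have : p = p' := hne p hp p' (Finset.mem_of_mem_erase hp') ((hprime p hp).dvd_of_dvd_pow hdp')
    exact (Finset.ne_of_mem_erase hp') this.symm
  set r : K[X] → K[X] := fun p => p ^ (e p - 1) * c p with hr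
  have hpr : ∀ p ∈ T, p * r p = m := by
    intro p hp
    show p * (p ^ (e p - 1) * c p) = m
    rw [← hmfac p hp, ← mul_assoc, ← pow_succ']
    have := he1 p hp
    congr 2
    omega
  -- choose witnesses whose `r p`-image is nonzero
  have huex : ∀ p ∈ T, ∃ uu : L, aeval f (r p) uu ≠ 0 := by
    intro p hp
    have hr0 : r p ≠ 0 := mul_ne_zero (pow_ne_zero _ (hprime p hp).ne_zero) (hc0 p)
    have hrdeg : (r p).natDegree < n := by
      have h1 : m.natDegree = p.natDegree + (r p).natDegree := by
        rw [← hpr p hp]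
        exact natDegree_mul (hprime p hp).ne_zero hr0
      have := hpdeg p hp
      omega
    have hNV := NV (r p) hr0 hrdeg
    by_contra hcon
    push_neg at hcon
    exact hNV (LinearMap.ext fun x => hcon x)
  choose! u hu using huex
  set ω := ∑ p ∈ T, aeval f (c p) (u p) with hω
  refine ⟨ω, ?_⟩
  -- key annihilator lemma for each p
  have B : ∀ p ∈ T, ∀ t : K[X], aeval f (t * c p) (u p) = 0 → p ^ e p ∣ t := by
    intro p hp t ht
    by_cases ht0 : t = 0
    · simp [ht0]
    obtain ⟨k, t', hndvd, rfl⟩ := WfDvdMonoid.max_power_factor ht0 (hprime p hp).irreducible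
    by_cases hke : e p ≤ k
    · exact Dvd.dvd.mul_right (pow_dvd_pow p hke) t'
    push_neg at hke
    exfalso
    have hk1 : aeval f (p ^ (e p - 1 - k) * (p ^ k * t' * c p)) (u p) = 0 := by
      rw [comp, ht, map_zero]
    have hexp : p ^ (e p - 1 - k) * (p ^ k * t' * c p) = t' * r p := by
      have h9 : e p - 1 - k + k = e p - 1 := by omega
      show _ = t' * (p ^ (e p - 1) * c p)
      conv_rhs => rw [← h9, pow_add]
      ring
    rw [hexp] at hk1
    obtain ⟨a, b, hab⟩ := (hprime p hp).coprime_iff_not_dvd.mpr hndvd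
    refine hu p hp ?_
    have hsplit : r p = a * (p * r p) + b * (t' * r p) := by
      calc r p = (a * p + b * t') * r p := by rw [hab, one_mul]
        _ = a * (p * r p) + b * (t' * r p) := by ring
    have hz1 : aeval f (a * (p * r p)) (u p) = 0 := by
      rw [comp, kill _ _ (dvd_of_eq (hpr p hp).symm), map_zero]
    have hz2 : aeval f (b * (t' * r p)) (u p) = 0 := by
      rw [comp, hk1, map_zero]
    rw [hsplit, map_add, LinearMap.add_apply, hz1, hz2, add_zero]
  -- annihilator of ω is generated by m
  have hann : ∀ q : K[X], aeval f q ω = 0 → m ∣ q := by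
    intro q hq
    rw [← hmT]
    refine Finset.prod_dvd_of_coprime ?_ ?_
    · intro p hp p' hp' hne'
      have h1 : ¬ p ∣ p' :=
        fun hd => hne' (hne p (Finset.mem_coe.mp hp) p' (Finset.mem_coe.mp hp') hd)
      exact ((hprime p (Finset.mem_coe.mp hp)).coprime_iff_not_dvd.mpr h1).pow
    · intro p hp
      have hterm : aeval f ((c p * q) * c p) (u p) = 0 := by
        have h1 : aeval f (c p * q) ω = 0 := by rw [comp, hq, map_zero]
        rw [hω, _root_.map_sum] at h1
        have h2 : ∑ p' ∈ T, aeval f (c p * q) (aeval f (c p') (u p')) =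
            aeval f (c p * q) (aeval f (c p) (u p)) := by
          refine Finset.sum_eq_single_of_mem p hp ?_
          intro p' hp'T hne'
          rw [← comp]
          refine kill _ _ ?_
          obtain ⟨d, hd⟩ :=
            Finset.dvd_prod_of_mem (fun q => q ^ e q) (Finset.mem_erase.mpr ⟨hne', hp'T⟩)
          exact ⟨d * q, by rw [show c p = p' ^ e p' * d from hd, ← hmfac p' hp'T]; ring⟩
        rw [h2, ← comp] at h1
        exact h1
      have hBe : p ^ e p ∣ c p * q := B p hp (c p * q) hterm
      have hcop : IsCoprime (p ^ e p) (c p) :=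
        IsCoprime.pow_left ((hprime p hp).coprime_iff_not_dvd.mpr (hpnotdvdc p hp))
      exact hcop.dvd_of_dvd_mul_left hBe
  -- conclude linear independence of the Galois orbit of ω
  have hGcard : Fintype.card (L ≃ₐ[K] L) = n :=
    Nat.card_eq_fintype_card (α := L ≃ₐ[K] L) ▸ IsGalois.card_aut_eq_finrank K L
  have hinj : Function.Injective (fun i : Fin n => φ ^ (i : ℕ)) := by
    intro i j hij
    exact Fin.ext (pow_injOn_Iio_orderOf (x := φ) (by simpa [hord] using i.isLt)
      (by simpa [hord] using j.isLt) hij)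
  have hbijE : Function.Bijective (fun i : Fin n => φ ^ (i : ℕ)) :=
    (Fintype.bijective_iff_injective_and_card _).mpr ⟨hinj, by simp [hGcard]⟩
  rw [← linearIndependent_equiv (Equiv.ofBijective _ hbijE)]
  have hfam : ((fun τ : L ≃ₐ[K] L => τ ω) ∘ (Equiv.ofBijective _ hbijE)) =
      fun i : Fin n => (φ ^ (i : ℕ)) ω := rfl
  rw [hfam, Fintype.linearIndependent_iff]
  intro a ha i
  set t : K[X] := ∑ j : Fin n, C (a j) * X ^ (j : ℕ) with htdef
  have hts : aeval f t ω = ∑ j : Fin n, a j • ((φ ^ (j : ℕ)) ω) := by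
    have key : ∀ x : L, aeval f t x = ∑ j : Fin n, a j • ((φ ^ (j : ℕ)) x) := ?_
    · exact key ω
    intro x
    rw [htdef, _root_.map_sum, LinearMap.coe_sum, Finset.sum_apply]
    refine Finset.sum_congr rfl fun j _ => ?_
    rw [_root_.map_mul, map_pow, aeval_X, aeval_C]
    rw [Module.End.mul_apply, Module.algebraMap_end_apply]
    congr 1
    rw [hf, ← AlgEquiv.pow_toLinearMap]
    rfl

  have ht0 : t = 0 := by
    by_contra htne
    have hdl := hann t (by rw [hts, ha])
    have hled := Polynomial.natDegree_le_of_dvd hdl htne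
    have hlt : t.natDegree ≤ n - 1 := by
      refine natDegree_sum_le_of_forall_le _ _ fun j _ => ?_
      exact le_trans (natDegree_C_mul_X_pow_le (a j) (j : ℕ)) (by omega)
    omega
  have hcoeff := congrArg (fun q : K[X] => q.coeff (i : ℕ)) ht0
  simp only [htdef, finset_sum_coeff, coeff_C_mul, coeff_X_pow, coeff_zero] at hcoeff
  rw [Finset.sum_eq_single i] at hcoeff
  · simpa using hcoeff
  · intro j _ hj
    rw [if_neg (fun h => hj (Fin.ext h.symm)), mul_zero]
  · intro h
    exact absurd (Finset.mem_univ i) h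


end NormalBasis

section InfCase
variable (K L : Type*) [Field K] [Field L] [Algebra K L] [FiniteDimensional K L]
  [IsGalois K L] [DecidableEq (L ≃ₐ[K] L)]

theorem infinite_case [Infinite K] :
    ∃ ω : L, (Matrix.of fun σ τ : L ≃ₐ[K] L => σ⁻¹ (τ ω)).det ≠ 0 := by
  classical
  obtain ⟨θ, hθ⟩ := Field.exists_primitive_element K L
  set v : (L ≃ₐ[K] L) → L := fun g => g θ with hv
  have hvinj : Function.Injective v := by
    intro g h hgh
    have hadj : Algebra.adjoin K {θ} = ⊤ := by
      have h1 := IntermediateField.adjoin_simple_toSubalgebra_of_isAlgebraic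
        (IsIntegral.of_finite K θ).isAlgebraic
      rw [hθ] at h1
      rw [← h1]
      rfl
    have hθmem : θ ∈ AlgHom.equalizer (g : L →ₐ[K] L) (h : L →ₐ[K] L) := hgh
    have : Algebra.adjoin K {θ} ≤ AlgHom.equalizer (g : L →ₐ[K] L) (h : L →ₐ[K] L) :=
      Algebra.adjoin_le (Set.singleton_subset_iff.mpr hθmem)
    rw [hadj] at this
    ext x
    exact this (Algebra.mem_top : x ∈ (⊤ : Subalgebra K L))
  set f : (L ≃ₐ[K] L) → L[X] := fun g =>
    ∏ h ∈ Finset.univ.erase g, (C ((v g - v h)⁻¹) * (X - C (v h))) with hfdef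
  have hf_self : ∀ g, (f g).eval (v g) = 1 := by
    intro g
    rw [hfdef]
    rw [eval_prod]
    refine Finset.prod_eq_one fun h hh => ?_
    have hne : v g - v h ≠ 0 :=
      sub_ne_zero.mpr fun hEq => (Finset.ne_of_mem_erase hh) (hvinj hEq).symm
    simp [inv_mul_cancel₀ hne]
  have hf_other : ∀ g h₀, h₀ ≠ g → (f g).eval (v h₀) = 0 := by
    intro g h₀ hne
    rw [hfdef, eval_prod]
    refine Finset.prod_eq_zero (Finset.mem_erase.mpr ⟨hne, Finset.mem_univ h₀⟩) ?_
    simp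
  have hmap : ∀ (ρ g : L ≃ₐ[K] L), (f g).map (ρ : L →+* L) = f (ρ * g) := by
    intro ρ g
    rw [hfdef]
    rw [Polynomial.map_prod]
    refine Finset.prod_bij' (fun h _ => ρ * h) (fun h _ => ρ⁻¹ * h) ?_ ?_ ?_ ?_ ?_
    · intro h hh
      refine Finset.mem_erase.mpr ⟨?_, Finset.mem_univ _⟩
      exact fun hEq => (Finset.ne_of_mem_erase hh) (mul_left_cancel hEq)
    · intro h hh
      refine Finset.mem_erase.mpr ⟨?_, Finset.mem_univ _⟩
      intro hEq
      apply Finset.ne_of_mem_erase hh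
      rw [← hEq]
      group
    · intro h _
      group
    · intro h _
      group
    · intro h _
      rw [Polynomial.map_mul, Polynomial.map_sub, map_C, map_C, map_X]
      have h1 : ρ (v g - v h) = v (ρ * g) - v (ρ * h) := by
        rw [map_sub]; rfl
      have h2 : (ρ : L →+* L) ((v g - v h)⁻¹) = (v (ρ * g) - v (ρ * h))⁻¹ := by
        rw [← h1]
        exact map_inv₀ (ρ : L →+* L) _
      rw [h2]
      rfl
  set A : Matrix (L ≃ₐ[K] L) (L ≃ₐ[K] L) L[X] :=
    Matrix.of (fun σ τ : L ≃ₐ[K] L => f (σ⁻¹ * τ)) with hA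
  set D : L[X] := A.det with hD
  have hDθ : D.eval θ = 1 := by
    rw [hD, ← Polynomial.coe_evalRingHom, RingHom.map_det, RingHom.mapMatrix_apply]
    have : A.map (evalRingHom θ) = (1 : Matrix (L ≃ₐ[K] L) (L ≃ₐ[K] L) L) := by
      ext σ τ
      rw [Matrix.map_apply, hA, Matrix.of_apply, coe_evalRingHom]
      by_cases hστ : σ = τ
      · subst hστ
        rw [inv_mul_cancel]
        have h1 : θ = v 1 := rfl
        rw [h1, hf_self, Matrix.one_apply_eq]
      · have hne1 : (1 : L ≃ₐ[K] L) ≠ σ⁻¹ * τ := by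
          intro hEq
          exact hστ (inv_mul_eq_one.mp hEq.symm)
        have h1 : θ = v 1 := rfl
        rw [h1, hf_other _ _ hne1, Matrix.one_apply_ne hστ]
    rw [this, Matrix.det_one]
  have hDne : D ≠ 0 := fun h => by simp [h] at hDθ
  -- find a good evaluation point in K
  have hbadfin : {c : K | algebraMap K L c ∈ D.roots.toFinset}.Finite :=
    Set.Finite.preimage (Set.injOn_of_injective (algebraMap K L).injective)
      (D.roots.toFinset : Finset L).finite_toSet
  obtain ⟨c, hc⟩ := Set.Infinite.nonempty (Set.Finite.infinite_compl hbadfin)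
  have heval : D.eval (algebraMap K L c) ≠ 0 := by
    intro h0
    apply hc
    show algebraMap K L c ∈ D.roots.toFinset
    rw [Multiset.mem_toFinset, mem_roots hDne]
    exact h0
  set c' := algebraMap K L c with hc'
  refine ⟨(f 1).eval c', ?_⟩
  have hgω : ∀ g : L ≃ₐ[K] L, g ((f 1).eval c') = (f g).eval c' := by
    intro g
    have h1 : g ((f 1).eval c') = ((f 1).map (g : L →+* L)).eval (g c') := by
      rw [eval_map]
      exact (Polynomial.eval₂_hom (p := f 1) (g : L →+* L) c').symm
    rw [h1, hmap, mul_one]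
    congr 1
    exact g.commutes c
  have hentry : (Matrix.of fun σ τ : L ≃ₐ[K] L => σ⁻¹ (τ ((f 1).eval c'))) =
      A.map (evalRingHom c') := by
    ext σ τ
    rw [Matrix.of_apply, Matrix.map_apply, hA, Matrix.of_apply, coe_evalRingHom]
    rw [← hgω (σ⁻¹ * τ)]
    rfl
  rw [hentry, ← RingHom.mapMatrix_apply, ← RingHom.map_det]
  simpa using heval


end InfCase

/-- For a finite Galois extension `L/K` with Galois group `{σ₁, …, σₙ}`, there exists
`ω ∈ L` such that the matrix with `(i, j)`-entry `σᵢ⁻¹(σⱼ(ω))` has nonzero determinant. -/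
theorem exists_nonzero_galois_determinant (K L : Type*) [Field K] [Field L] [Algebra K L]
    [FiniteDimensional K L] [IsGalois K L] [DecidableEq (L ≃ₐ[K] L)] :
    ∃ ω : L, (Matrix.of fun σ τ : L ≃ₐ[K] L => σ⁻¹ (τ ω)).det ≠ 0 := by
  cases finite_or_infinite K with
  | inl h =>
    obtain ⟨ω, hω⟩ := finite_normal_basis K L
    exact ⟨ω, detA ω hω⟩
  | inr h => exact infinite_case K L
end

section
/- Let K be a field of characteristic zero containing a primitive n-th root of unity, and let L/K be a finite Galois extension whose Galois group is abelian of exponent dividing n. Then L is generated over K by elements whose n-th powers lie in K; that is, L = K(α₁, …, α_r) for elements α₁, …, α_r ∈ L with αᵢⁿ ∈ K for each i. -/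
open Polynomial

/-- Kernel of `∏ (f - μ)` is contained in the span of eigenspaces. -/
lemma ker_prod_le_iSup_eigenspace {K V : Type*} [Field K] [AddCommGroup V] [Module K V]
    (f : Module.End K V) (s : Finset K) :
    LinearMap.ker (aeval f (∏ μ ∈ s, (X - C μ))) ≤ ⨆ μ : K, f.eigenspace μ := by
  classical
  induction s using Finset.induction_on with
  | empty => simp [Module.End.one_eq_id]
  | @insert a s ha ih =>
    have hcop : IsCoprime (X - C a) (∏ μ ∈ s, (X - C μ)) :=
      IsCoprime.prod_right fun μ hμ =>
        isCoprime_X_sub_C_of_isUnit_sub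
          (IsUnit.mk0 _ (sub_ne_zero_of_ne (by rintro rfl; exact ha hμ)))
    rw [Finset.prod_insert ha, ← Polynomial.sup_ker_aeval_eq_ker_aeval_mul_of_coprime f hcop]
    refine sup_le ?_ ih
    intro x hx
    have hx' : f x = a • x := by
      have := LinearMap.mem_ker.mp hx
      rw [map_sub, aeval_X, aeval_C] at this
      have h2 : f x - a • x = 0 := by
        simpa [Module.algebraMap_end_apply] using this
      rw [sub_eq_zero] at h2
      exact h2
    exact le_iSup (fun μ : K => f.eigenspace μ) a
      (Module.End.mem_eigenspace_iff.mpr hx')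

/-- **Kummer theory**: if `K` has characteristic zero and contains a primitive `n`-th root of
unity, and `L/K` is a finite Galois extension whose Galois group is abelian of exponent
dividing `n`, then `L = K(α₁, …, α_r)` with `αᵢⁿ ∈ K` for each `i`. -/
theorem kummer_generators (K L : Type*) [Field K] [CharZero K] [Field L] [Algebra K L]
    [FiniteDimensional K L] [IsGalois K L] (n : ℕ) (ζ : K) (hζ : IsPrimitiveRoot ζ n)
    (habelian : ∀ σ τ : L ≃ₐ[K] L, σ * τ = τ * σ)
    (hexp : ∀ σ : L ≃ₐ[K] L, σ ^ n = 1) :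
    ∃ (r : ℕ) (α : Fin r → L),
      (∀ i : Fin r, α i ^ n ∈ (algebraMap K L).range) ∧
      Algebra.adjoin K (Set.range α) = ⊤ := by
  classical
  set S : Set L := {x : L | x ^ n ∈ (algebraMap K L).range} with hS_def
  -- Step 1: S spans L over K.
  have hS : Submodule.span K S = ⊤ := by
    rcases Nat.eq_zero_or_pos n with hn | hn
    · have : S = Set.univ := by
        ext x
        simp only [hS_def, hn, pow_zero, Set.mem_setOf_eq, Set.mem_univ, iff_true]
        exact ⟨1, map_one _⟩
      rw [this, Submodule.span_univ]
    · -- the commuting family of Galois automorphisms as linear maps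
      set f : (L ≃ₐ[K] L) → Module.End K L := fun σ => σ.toLinearMap with hf_def
      have hnK : (n : K) ≠ 0 := Nat.cast_ne_zero.mpr hn.ne'
      have hfn : ∀ σ : L ≃ₐ[K] L, (f σ) ^ n = 1 := by
        intro σ
        rw [hf_def, ← AlgEquiv.pow_toLinearMap, hexp σ]
        rfl
      have haeval : ∀ σ : L ≃ₐ[K] L, aeval (f σ) (X ^ n - 1 : K[X]) = 0 := by
        intro σ
        rw [map_sub, map_pow, aeval_X, map_one, hfn σ, sub_self]
      have hsq : Squarefree (X ^ n - 1 : K[X]) :=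
        (Polynomial.X_pow_sub_one_separable_iff.mpr hnK).squarefree
      have hss : ∀ σ, Module.End.IsFinitelySemisimple (f σ) := fun σ =>
        (Module.End.isSemisimple_of_squarefree_aeval_eq_zero hsq
          (haeval σ)).isFinitelySemisimple
      have hcomm : Pairwise fun σ τ : L ≃ₐ[K] L => Commute (f σ) (f τ) := by
        intro σ τ _
        show f σ * f τ = f τ * f σ
        ext x
        have := DFunLike.congr_fun (habelian σ τ) x
        simpa [hf_def, AlgEquiv.mul_apply] using this
      have htop : ∀ σ, ⨆ μ : K, (f σ).maxGenEigenspace μ = ⊤ := by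
        intro σ
        simp_rw [(hss σ).maxGenEigenspace_eq_eigenspace]
        rw [eq_top_iff]
        have hker : LinearMap.ker (aeval (f σ) (X ^ n - 1 : K[X])) = ⊤ :=
          LinearMap.ker_eq_top.mpr (haeval σ)
        rw [← hker, X_pow_sub_one_eq_prod hn hζ]
        exact ker_prod_le_iSup_eigenspace (f σ) _
      have hsim := Module.End.iSup_iInf_maxGenEigenspace_eq_top_of_iSup_maxGenEigenspace_eq_top_of_commute
        f hcomm htop
      rw [eq_top_iff, ← hsim]
      refine iSup_le fun χ => ?_
      simp_rw [(hss _).maxGenEigenspace_eq_eigenspace]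
      intro x hx
      refine Submodule.subset_span ?_
      show x ^ n ∈ (algebraMap K L).range
      rcases eq_or_ne x 0 with rfl | hx0
      · exact ⟨0, by rw [map_zero, zero_pow hn.ne']⟩
      have heig : ∀ σ, σ x = χ σ • x := fun σ =>
        Module.End.mem_eigenspace_iff.mp (Submodule.mem_iInf _ |>.mp hx σ)
      have hχn : ∀ σ : L ≃ₐ[K] L, χ σ ^ n = 1 := by
        intro σ
        have hev : (f σ).HasEigenvector (χ σ) x :=
          ⟨Submodule.mem_iInf _ |>.mp hx σ, hx0⟩
        have h1 : ((f σ) ^ n) x = χ σ ^ n • x := hev.pow_apply n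
        rw [hfn σ] at h1
        have h2 : χ σ ^ n • x = (1 : K) • x := by
          rw [one_smul]; exact h1.symm
        exact smul_left_injective K hx0 h2
      have hfix : ∀ σ : L ≃ₐ[K] L, σ (x ^ n) = x ^ n := by
        intro σ
        rw [map_pow, heig σ, _root_.smul_pow, hχn σ, one_smul]
      have hbot : x ^ n ∈ (⊥ : IntermediateField K L) := by
        rw [← OrderIso.map_bot IsGalois.intermediateFieldEquivSubgroup.symm]
        rintro ⟨σ, -⟩
        exact hfix σ
      obtain ⟨y, hy⟩ := IntermediateField.mem_bot.mp hbot
      exact ⟨y, hy⟩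
  -- Step 2: extract a finite spanning subset of S.
  obtain ⟨t, htS, htspan⟩ : ∃ t : Finset L, ↑t ⊆ S ∧ Submodule.span K (↑t : Set L) = ⊤ := by
    have hcpt : IsCompactElement (⊤ : Submodule K L) :=
      (Submodule.fg_iff_compact _).mp (IsNoetherian.noetherian ⊤)
    rw [Submodule.span_eq_iSup_of_singleton_spans] at hS
    have hle : (⊤ : Submodule K L) ≤ ⨆ x : S, Submodule.span K {(x : L)} := by
      rw [← hS]; rw [iSup_subtype]
    obtain ⟨s, hs⟩ := CompleteLattice.IsCompactElement.exists_finset_of_le_iSup _ hcpt _ hle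
    refine ⟨s.image Subtype.val, ?_, ?_⟩
    · intro x hx
      simp only [Finset.coe_image, Set.mem_image] at hx
      obtain ⟨y, -, rfl⟩ := hx
      exact y.2
    · rw [eq_top_iff]
      refine le_trans hs ?_
      refine iSup_le fun i => iSup_le fun hi => ?_
      refine Submodule.span_mono ?_
      simp only [Set.singleton_subset_iff, Finset.coe_image, Set.mem_image]
      exact ⟨i, hi, rfl⟩
  refine ⟨t.card, fun i => (t.equivFin.symm i : L), fun i => htS (t.equivFin.symm i).2, ?_⟩
  have hrange : Set.range (fun i => ((t.equivFin.symm i : L))) = (↑t : Set L) := by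
    ext x
    simp only [Set.mem_range, Finset.mem_coe]
    constructor
    · rintro ⟨i, rfl⟩; exact (t.equivFin.symm i).2
    · intro hx; exact ⟨t.equivFin ⟨x, hx⟩, by simp⟩
  rw [hrange, eq_top_iff]
  intro x _
  have hx : x ∈ Submodule.span K (↑t : Set L) := htspan ▸ Submodule.mem_top
  exact Algebra.span_le_adjoin K _ hx
end

section
/- Let s ∈ ℂ with Re s > 0 and s ≠ 1, and let N ≥ 1 be an integer. Then the Riemann zeta function satisfies ζ(s) = Σ_{n=1}^{N} n^{−s} + N^{1−s}/(s − 1) − (1/2)·N^{−s} + s·∫_N^∞ (1/2 − {u})·u^{−s−1} du, where {u} denotes the fractional part of u. -/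
open MeasureTheory Set Filter Topology

noncomputable def emI (s : ℂ) (u : ℝ) : ℂ :=
  ((1 / 2 - Int.fract u : ℝ) : ℂ) * (u : ℂ) ^ (-s - 1)

lemma emI_contOn (s : ℂ) : ContinuousOn (fun u : ℝ => (u : ℂ) ^ (-s - 1)) (Ioi 0) := by
  refine ContinuousOn.cpow (Complex.continuous_ofReal.continuousOn) continuousOn_const ?_
  intro x hx
  exact Or.inl (by simpa using (mem_Ioi.mp hx))

lemma emI_meas (s : ℂ) {a : ℝ} (ha : 0 < a) :
    AEStronglyMeasurable (emI s) (volume.restrict (Ioi a)) := by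
  apply AEStronglyMeasurable.mul
  · exact (Complex.measurable_ofReal.comp (measurable_const.sub measurable_fract)).aestronglyMeasurable
  · exact ((emI_contOn s).mono (Ioi_subset_Ioi ha.le)).aestronglyMeasurable measurableSet_Ioi

lemma emI_norm_le (s : ℂ) {u : ℝ} (hu : 0 < u) :
    ‖emI s u‖ ≤ 1 / 2 * u ^ (-s.re - 1) := by
  rw [emI, norm_mul, 
    Complex.norm_cpow_eq_rpow_re_of_pos hu]
  have h1 : (-s - 1).re = -s.re - 1 := by simp
  rw [h1]
  gcongr
  rw [Complex.norm_real, Real.norm_eq_abs, abs_le]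
  constructor
  · have := Int.fract_lt_one u; linarith
  · have := Int.fract_nonneg u; linarith

lemma emI_integrable {s : ℂ} (hs : 0 < s.re) {a : ℝ} (ha : 0 < a) :
    IntegrableOn (emI s) (Ioi a) := by
  refine Integrable.mono' ((integrableOn_Ioi_rpow_of_lt (show -s.re - 1 < -1 by linarith) ha).const_mul (1/2)) (emI_meas s ha) ?_
  filter_upwards [ae_restrict_mem measurableSet_Ioi] with u hu
  exact emI_norm_le s (ha.trans hu)

lemma hasDerivAt_real_cpow_aux {u : ℝ} (hu : u ≠ 0) {c : ℂ} (hc : c ≠ 0) :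
    HasDerivAt (fun y : ℝ => (y : ℂ) ^ c) (c * (u : ℂ) ^ (c - 1)) u := by
  have hr : c - 1 ≠ -1 := by
    intro h; apply hc; have := sub_eq_iff_eq_add.mp h; simpa using this
  have h := (hasDerivAt_ofReal_cpow_const' hu hr).const_mul c
  rw [sub_add_cancel] at h
  have heq : (fun y : ℝ => c * ((y : ℂ) ^ c / c)) = fun y : ℝ => (y : ℂ) ^ c := by
    funext y; rw [mul_div_cancel₀ _ hc]
  rwa [heq] at h

lemma emI_interval (n : ℕ) (hn : 1 ≤ n) {s : ℂ} (hs0 : s ≠ 0) (hs1 : s ≠ 1) :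
    ∫ u in (n : ℝ)..((n : ℝ) + 1), s * emI s u
      = 1 / 2 * ((n : ℂ) ^ (-s) + ((n : ℂ) + 1) ^ (-s))
        + ((n : ℂ) ^ (1 - s) - ((n : ℂ) + 1) ^ (1 - s)) / (1 - s) := by
  have hn0 : (0:ℝ) < n := by exact_mod_cast hn
  have hle : (n:ℝ) ≤ (n:ℝ) + 1 := by linarith
  -- replace fract by u - n a.e.
  have hcongr : ∫ u in (n : ℝ)..((n : ℝ) + 1), s * emI s u
      = ∫ u in (n : ℝ)..((n : ℝ) + 1),
          s * (((1 / 2 - (u - (n:ℝ)) : ℝ) : ℂ) * (u : ℂ) ^ (-s - 1)) := by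
    apply intervalIntegral.integral_congr_ae
    have hae : ∀ᵐ x : ℝ, x ≠ ((n:ℝ) + 1) := by
      rw [ae_iff]; simpa using Real.volume_singleton
    filter_upwards [hae] with x hx hmem
    rw [Set.uIoc_of_le hle] at hmem
    have hx1 : x < (n:ℝ) + 1 := lt_of_le_of_ne hmem.2 hx
    have hfl : ⌊x⌋ = (n : ℤ) := by
      rw [Int.floor_eq_iff]; constructor <;> push_cast <;> [linarith [hmem.1]; linarith]
    have hfr : Int.fract x = x - (n:ℝ) := by
      rw [Int.fract, hfl]; push_cast; ring
    rw [emI, hfr]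
  rw [hcongr]
  -- FTC
  have key : ∫ u in (n : ℝ)..((n : ℝ) + 1),
        s * (((1 / 2 - (u - (n:ℝ)) : ℝ) : ℂ) * (u : ℂ) ^ (-s - 1))
      = (fun u : ℝ => ((u:ℂ) - n - 1/2) * (u:ℂ) ^ (-s) - (u:ℂ) ^ (1 - s) / (1 - s)) ((n:ℝ)+1)
        - (fun u : ℝ => ((u:ℂ) - n - 1/2) * (u:ℂ) ^ (-s) - (u:ℂ) ^ (1 - s) / (1 - s)) (n:ℝ) := by
    apply intervalIntegral.integral_eq_sub_of_hasDerivAt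
      (f := fun u : ℝ => ((u:ℂ) - n - 1/2) * (u:ℂ) ^ (-s) - (u:ℂ) ^ (1 - s) / (1 - s))
      (f' := fun u : ℝ => s * (((1 / 2 - (u - (n:ℝ)) : ℝ) : ℂ) * (u : ℂ) ^ (-s - 1)))
    · intro u hu
      rw [Set.uIcc_of_le hle] at hu
      have hu0 : (0:ℝ) < u := lt_of_lt_of_le hn0 hu.1
      have hA : HasDerivAt (fun y : ℝ => (y:ℂ) - (n:ℂ) - 1/2) 1 u := by
        simpa using ((hasDerivAt_id u).ofReal_comp.sub_const (n:ℂ)).sub_const (1/2 : ℂ)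
      have hB : HasDerivAt (fun y : ℝ => (y:ℂ) ^ (-s)) (-s * (u:ℂ) ^ (-s - 1)) u :=
        hasDerivAt_real_cpow_aux hu0.ne' (neg_ne_zero.mpr hs0)
      have hC : HasDerivAt (fun y : ℝ => (y:ℂ) ^ (1 - s) / (1 - s)) ((u:ℂ) ^ (-s)) u := by
        have hr : -s ≠ -1 := fun h => hs1 (by
          have := neg_injective h; exact this)
        have := hasDerivAt_ofReal_cpow_const' hu0.ne' hr
        rwa [neg_add_eq_sub] at this
      have := (hA.mul hB).sub hC
      convert this using 1
      · rfl
      push_cast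
      ring
    · apply ContinuousOn.intervalIntegrable
      rw [Set.uIcc_of_le hle]
      have hsub : Set.Icc (n:ℝ) ((n:ℝ)+1) ⊆ Set.Ioi 0 := fun x hx => lt_of_lt_of_le hn0 hx.1
      refine continuousOn_const.mul (ContinuousOn.mul ?_ ((emI_contOn s).mono hsub))
      exact (Complex.continuous_ofReal.comp
        (by fun_prop : Continuous fun u : ℝ => 1/2 - (u - (n:ℝ)))).continuousOn
  rw [key]
  have h1 : ((((n:ℝ) + 1 : ℝ)) : ℂ) = (n:ℂ) + 1 := by push_cast; ring
  have h2 : (((n:ℝ) : ℝ) : ℂ) = (n:ℂ) := by push_cast; ring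
  simp only [h1, h2]
  push_cast
  ring


lemma emI_intervalIntegrable {s : ℂ} (hs : 0 < s.re) {a b : ℝ} (ha : 1 ≤ a)
    (hab : a ≤ b) : IntervalIntegrable (emI s) volume a b := by
  rw [intervalIntegrable_iff_integrableOn_Ioc_of_le hab]
  refine (emI_integrable hs (show (0:ℝ) < 1/2 by norm_num)).mono_set ?_
  intro x hx
  simp only [mem_Ioi]
  have := hx.1
  linarith

lemma emI_telescope {s : ℂ} (hs : 0 < s.re) (hs1 : s ≠ 1) (N : ℕ) (hN : 1 ≤ N) :
    ∀ M : ℕ, N ≤ M →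
    s * ∫ u in (N : ℝ)..(M : ℝ), emI s u
      = (∑ n ∈ Finset.Icc (N+1) M, (n : ℂ) ^ (-s)) + 1/2 * (N : ℂ) ^ (-s)
        - 1/2 * (M : ℂ) ^ (-s) + ((M : ℂ) ^ (1-s) - (N : ℂ) ^ (1-s)) / (s - 1) := by
  have hs0 : s ≠ 0 := by intro h; rw [h] at hs; simp at hs
  have hsub1 : s - 1 ≠ 0 := sub_ne_zero.mpr hs1
  have h1subs : (1:ℂ) - s ≠ 0 := sub_ne_zero.mpr (Ne.symm hs1)
  refine Nat.le_induction ?_ ?_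
  · rw [intervalIntegral.integral_same]
    rw [Finset.Icc_eq_empty (by omega)]
    simp
  · intro M hMN IH
    have hNM : (N:ℝ) ≤ (M:ℝ) := by exact_mod_cast hMN
    have hMM : (M:ℝ) ≤ (M:ℝ) + 1 := by linarith
    have hM1 : (1:ℝ) ≤ (M:ℝ) := by exact_mod_cast le_trans hN hMN
    have hadd := intervalIntegral.integral_add_adjacent_intervals
      (emI_intervalIntegrable hs (by exact_mod_cast hN) hNM)
      (emI_intervalIntegrable hs hM1 hMM) (μ := volume) (f := emI s)
    have hcast : ((M+1 : ℕ) : ℝ) = (M:ℝ) + 1 := by push_cast; ring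
    rw [hcast, ← hadd, mul_add, IH,
      show s * ∫ x in (M:ℝ)..((M:ℝ)+1), emI s x
          = ∫ x in (M:ℝ)..((M:ℝ)+1), s * emI s x from
        (intervalIntegral.integral_const_mul _ _).symm,
      emI_interval M (le_trans hN hMN) hs0 hs1,
      Finset.sum_Icc_succ_top (by omega : N+1 ≤ M+1)]
    push_cast
    field_simp
    ring

lemma cpow_nat_tendsto_zero {c : ℂ} (hc : c.re < 0) :
    Filter.Tendsto (fun M : ℕ => (M : ℂ) ^ c) atTop (𝓝 0) := by
  rw [tendsto_zero_iff_norm_tendsto_zero]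
  have h := (tendsto_rpow_neg_atTop (show 0 < -c.re by linarith)).comp
    (tendsto_natCast_atTop_atTop (R := ℝ))
  refine h.congr' ?_
  filter_upwards [eventually_ge_atTop 1] with M hM
  simp only [Function.comp_apply, neg_neg]
  exact (Complex.norm_natCast_cpow_of_pos hM c).symm

lemma em_of_one_lt {s : ℂ} (hs : 1 < s.re) (N : ℕ) (hN : 1 ≤ N) :
    riemannZeta s = ∑ n ∈ Finset.Icc 1 N, (n : ℂ) ^ (-s)
      + (N : ℂ) ^ (1 - s) / (s - 1) - (1 / 2) * (N : ℂ) ^ (-s)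
      + s * ∫ u in Set.Ioi (N : ℝ), emI s u := by
  have hs' : 0 < s.re := by linarith
  have hs0 : s ≠ 0 := by intro h; rw [h] at hs'; simp at hs'
  have hs1 : s ≠ 1 := by intro h; rw [h] at hs; simp at hs
  have hNpos : (0:ℝ) < N := by exact_mod_cast hN
  -- partial sums of zeta
  have hsummable : Summable (fun n : ℕ => 1 / (n : ℂ) ^ s) :=
    Complex.summable_one_div_nat_cpow.mpr hs
  have hzeta := zeta_eq_tsum_one_div_nat_cpow hs
  have hTtend : Filter.Tendsto (fun M : ℕ => ∑ n ∈ Finset.Icc 1 M, (n : ℂ) ^ (-s))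
      atTop (𝓝 (riemannZeta s)) := by
    have h1 := hsummable.hasSum.tendsto_sum_nat.comp (tendsto_add_atTop_nat 1)
    rw [← hzeta] at h1
    refine h1.congr (fun M => ?_)
    simp only [Function.comp_apply]
    have hset : Finset.range (M+1) = insert 0 (Finset.Icc 1 M) := by
      ext x
      simp only [Finset.mem_range, Finset.mem_insert, Finset.mem_Icc]
      omega
    rw [hset, Finset.sum_insert (by simp)]
    rw [Nat.cast_zero, Complex.zero_cpow hs0, div_zero, zero_add]
    exact Finset.sum_congr rfl (fun n _ => by rw [Complex.cpow_neg, one_div])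
  -- integral limit
  have hItend : Filter.Tendsto (fun M : ℕ => ∫ u in (N:ℝ)..(M:ℝ), emI s u) atTop
      (𝓝 (∫ u in Set.Ioi (N:ℝ), emI s u)) :=
    intervalIntegral_tendsto_integral_Ioi _ (emI_integrable hs' hNpos)
      tendsto_natCast_atTop_atTop
  have hmul := hItend.const_mul s
  have hsplit : ∀ M : ℕ, N ≤ M → ∑ n ∈ Finset.Icc (N+1) M, (n : ℂ) ^ (-s)
      = (∑ n ∈ Finset.Icc 1 M, (n : ℂ) ^ (-s)) - ∑ n ∈ Finset.Icc 1 N, (n : ℂ) ^ (-s) := by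
    intro M hM
    have hu : Finset.Icc 1 M = Finset.Icc 1 N ∪ Finset.Icc (N+1) M := by
      ext x
      simp only [Finset.mem_Icc, Finset.mem_union]
      omega
    rw [hu, Finset.sum_union (by rw [Finset.disjoint_left]; intro x; simp; omega)]
    ring
  have h2 : Filter.Tendsto (fun M : ℕ => (M : ℂ) ^ (-s)) atTop (𝓝 0) :=
    cpow_nat_tendsto_zero (by simp; linarith)
  have h3 : Filter.Tendsto (fun M : ℕ => (M : ℂ) ^ (1 - s)) atTop (𝓝 0) :=
    cpow_nat_tendsto_zero (by simp [Complex.sub_re]; linarith)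
  have tendE : Filter.Tendsto (fun M : ℕ =>
        ((∑ n ∈ Finset.Icc 1 M, (n : ℂ) ^ (-s)) - ∑ n ∈ Finset.Icc 1 N, (n : ℂ) ^ (-s))
        + 1/2 * (N : ℂ) ^ (-s) - 1/2 * (M : ℂ) ^ (-s)
        + ((M : ℂ) ^ (1-s) - (N : ℂ) ^ (1-s)) / (s - 1)) atTop
      (𝓝 ((riemannZeta s - ∑ n ∈ Finset.Icc 1 N, (n : ℂ) ^ (-s))
        + 1/2 * (N : ℂ) ^ (-s) - 1/2 * 0 + ((0:ℂ) - (N : ℂ) ^ (1-s)) / (s - 1))) := by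
    exact (((hTtend.sub_const _).add_const _).sub (h2.const_mul _)).add
      ((h3.sub_const _).div_const _)
  have hev : ∀ᶠ M : ℕ in atTop, s * ∫ u in (N:ℝ)..(M:ℝ), emI s u
      = ((∑ n ∈ Finset.Icc 1 M, (n : ℂ) ^ (-s)) - ∑ n ∈ Finset.Icc 1 N, (n : ℂ) ^ (-s))
        + 1/2 * (N : ℂ) ^ (-s) - 1/2 * (M : ℂ) ^ (-s)
        + ((M : ℂ) ^ (1-s) - (N : ℂ) ^ (1-s)) / (s - 1) := by
    filter_upwards [eventually_ge_atTop N] with M hM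
    rw [emI_telescope hs' hs1 N hN M hM, hsplit M hM]
  have hkey := tendsto_nhds_unique (hmul.congr' hev) tendE
  rw [hkey]
  ring

lemma emI_int_differentiable {a : ℝ} (ha : 1 ≤ a) {s₀ : ℂ} (hs : 0 < s₀.re) :
    DifferentiableAt ℂ (fun s => ∫ u in Set.Ioi a, emI s u) s₀ := by
  have ha0 : (0:ℝ) < a := lt_of_lt_of_le one_pos ha
  set σ : ℝ := s₀.re with hσ
  set F' : ℂ → ℝ → ℂ := fun s u =>
    ((1 / 2 - Int.fract u : ℝ) : ℂ) * ((u : ℂ) ^ (-s - 1) * ((Real.log u : ℂ) * (-1)))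
    with hF'
  have hmeas : ∀ᶠ s in 𝓝 s₀, AEStronglyMeasurable (emI s) (volume.restrict (Set.Ioi a)) :=
    Filter.Eventually.of_forall (fun s => emI_meas s ha0)
  have hint : Integrable (emI s₀) (volume.restrict (Set.Ioi a)) := emI_integrable hs ha0
  have hF'meas : AEStronglyMeasurable (F' s₀) (volume.restrict (Set.Ioi a)) := by
    refine AEStronglyMeasurable.mul
      ((Complex.measurable_ofReal.comp (measurable_const.sub measurable_fract)).aestronglyMeasurable)
      (ContinuousOn.aestronglyMeasurable ?_ measurableSet_Ioi)
    refine ContinuousOn.mul ((emI_contOn s₀).mono (Set.Ioi_subset_Ioi ha0.le)) ?_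
    refine ContinuousOn.mul ?_ continuousOn_const
    refine Complex.continuous_ofReal.comp_continuousOn (Real.continuousOn_log.mono ?_)
    intro x hx
    exact ne_of_gt (lt_of_lt_of_le ha0 (le_of_lt hx))
  have hbound : ∀ᵐ u ∂(volume.restrict (Set.Ioi a)), ∀ s ∈ Metric.ball s₀ (σ/2),
      ‖F' s u‖ ≤ Real.log u * u ^ (-σ/2 - 1) := by
    filter_upwards [ae_restrict_mem measurableSet_Ioi] with u hu s hsb
    have hu1 : (1:ℝ) ≤ u := le_of_lt (lt_of_le_of_lt ha hu)
    have hu0 : (0:ℝ) < u := lt_of_lt_of_le one_pos hu1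
    have hres : σ/2 ≤ s.re := by
      have h1 : |s.re - σ| ≤ ‖s - s₀‖ := by
        rw [← Complex.sub_re]; exact Complex.abs_re_le_norm _
      have h2 : ‖s - s₀‖ < σ/2 := by rwa [Metric.mem_ball, Complex.dist_eq] at hsb
      have := abs_le.mp (le_of_lt (lt_of_le_of_lt h1 h2))
      linarith [this.1]
    rw [hF', norm_mul, norm_mul, norm_mul]
    have hfr : ‖((1 / 2 - Int.fract u : ℝ) : ℂ)‖ ≤ 1/2 := by
      rw [Complex.norm_real, Real.norm_eq_abs, abs_le]
      constructor
      · have := Int.fract_lt_one u; linarith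
      · have := Int.fract_nonneg u; linarith
    have hcp : ‖(u : ℂ) ^ (-s - 1)‖ ≤ u ^ (-σ/2 - 1) := by
      rw [Complex.norm_cpow_eq_rpow_re_of_pos hu0]
      refine Real.rpow_le_rpow_of_exponent_le hu1 ?_
      simp only [Complex.sub_re, Complex.neg_re, Complex.one_re]
      linarith
    have hlg : ‖((Real.log u : ℝ) : ℂ)‖ = Real.log u := by
      rw [Complex.norm_real, Real.norm_eq_abs, abs_of_nonneg (Real.log_nonneg hu1)]
    rw [hlg, norm_neg, norm_one, mul_one]
    calc ‖((1 / 2 - Int.fract u : ℝ) : ℂ)‖ * (‖(u : ℂ) ^ (-s - 1)‖ * Real.log u)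
        ≤ 1 * (u ^ (-σ/2 - 1) * Real.log u) := by
          refine mul_le_mul (hfr.trans (by norm_num)) ?_ (mul_nonneg (norm_nonneg _) (Real.log_nonneg hu1)) one_pos.le
          exact mul_le_mul_of_nonneg_right hcp (Real.log_nonneg hu1)
      _ = Real.log u * u ^ (-σ/2 - 1) := by ring
  have hbound_int : Integrable (fun u : ℝ => Real.log u * u ^ (-σ/2 - 1))
      (volume.restrict (Set.Ioi a)) := by
    have hmeasb : AEStronglyMeasurable (fun u : ℝ => Real.log u * u ^ (-σ/2 - 1))
        (volume.restrict (Set.Ioi a)) := by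
      refine ContinuousOn.aestronglyMeasurable ?_ measurableSet_Ioi
      refine ContinuousOn.mul (Real.continuousOn_log.mono ?_) ?_
      · intro x hx; exact ne_of_gt (lt_of_lt_of_le ha0 (le_of_lt hx))
      · exact ContinuousOn.rpow_const continuousOn_id
          (fun x hx => Or.inl (ne_of_gt (lt_of_lt_of_le ha0 (le_of_lt hx))))
    refine Integrable.mono'
      ((integrableOn_Ioi_rpow_of_lt (show -σ/4 - 1 < -1 by
          have h0 : 0 < σ := hs
          linarith) ha0).const_mul (4/σ)) hmeasb ?_
    filter_upwards [ae_restrict_mem measurableSet_Ioi] with u hu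
    have hu1 : (1:ℝ) ≤ u := le_of_lt (lt_of_le_of_lt ha hu)
    have hu0 : (0:ℝ) < u := lt_of_lt_of_le one_pos hu1
    have hσ0 : (0:ℝ) < σ := hs
    rw [Real.norm_eq_abs, abs_of_nonneg
      (mul_nonneg (Real.log_nonneg hu1) (Real.rpow_nonneg hu0.le _))]
    have hlog : Real.log u ≤ u ^ (σ/4) / (σ/4) :=
      Real.log_le_rpow_div hu0.le (by linarith)
    calc Real.log u * u ^ (-σ/2 - 1)
        ≤ (u ^ (σ/4) / (σ/4)) * u ^ (-σ/2 - 1) := by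
          exact mul_le_mul_of_nonneg_right hlog (by positivity)
      _ = (4/σ) * (u ^ (σ/4) * u ^ (-σ/2 - 1)) := by field_simp
      _ = (4/σ) * u ^ (-σ/4 - 1) := by
          rw [← Real.rpow_add hu0]; ring_nf
  have hdiff : ∀ᵐ u ∂(volume.restrict (Set.Ioi a)), ∀ s ∈ Metric.ball s₀ (σ/2),
      HasDerivAt (fun s' => emI s' u) (F' s u) s := by
    filter_upwards [ae_restrict_mem measurableSet_Ioi] with u hu s _
    have hu1 : (1:ℝ) ≤ u := le_of_lt (lt_of_le_of_lt ha hu)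
    have hu0 : (0:ℝ) < u := lt_of_lt_of_le one_pos hu1
    have huc : (u : ℂ) ≠ 0 := by exact_mod_cast hu0.ne'
    have h1 : HasDerivAt (fun s' : ℂ => -s' - 1) (-1) s := by
      simpa using ((hasDerivAt_id s).neg.sub_const 1)
    have h2 := h1.const_cpow (c := (u:ℂ)) (Or.inl huc)
    have h3 := h2.const_mul ((1 / 2 - Int.fract u : ℝ) : ℂ)
    rw [hF']
    convert h3 using 1
    · rfl
    · rfl
    · rfl
    simp only [Complex.ofReal_log hu0.le]
    ring
  have := (hasDerivAt_integral_of_dominated_loc_of_deriv_le (Metric.ball_mem_nhds s₀ (by positivity : (0:ℝ) < σ/2))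
    hmeas hint hF'meas hbound hbound_int hdiff).2
  exact this.differentiableAt

def emU : Set ℂ := {s : ℂ | 0 < s.re} ∩ {(1 : ℂ)}ᶜ

lemma emU_open : IsOpen emU :=
  (isOpen_lt continuous_const Complex.continuous_re).inter isOpen_compl_singleton

lemma emU_mem {s : ℂ} : s ∈ emU ↔ 0 < s.re ∧ s ≠ 1 := by
  simp [emU]

lemma seg_re_im {x y p : ℂ} (hp : p ∈ segment ℝ x y) :
    ∃ t : ℝ, 0 ≤ t ∧ t ≤ 1 ∧ p.re = (1 - t) * x.re + t * y.re
      ∧ p.im = (1 - t) * x.im + t * y.im := by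
  rw [segment_eq_image] at hp
  obtain ⟨t, ht, rfl⟩ := hp
  exact ⟨t, ht.1, ht.2, by simp [Complex.add_re, Complex.smul_re], by
    simp [Complex.add_im, Complex.smul_im]⟩

lemma emU_joined_of_im_ne {z : ℂ} (hre : 0 < z.re) (him : z.im ≠ 0) :
    JoinedIn emU z 2 := by
  set w : ℂ := 2 + z.im * Complex.I with hw
  have hwre : w.re = 2 := by simp [hw]
  have hwim : w.im = z.im := by simp [hw]
  have hwU : w ∈ emU := emU_mem.mpr ⟨by rw [hwre]; norm_num,
    fun h => by rw [h] at hwre; norm_num at hwre⟩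
  have h2U : (2:ℂ) ∈ emU := emU_mem.mpr ⟨by norm_num, by norm_num⟩
  have j1 : JoinedIn emU z w := by
    apply JoinedIn.of_segment_subset
    intro p hp
    obtain ⟨t, ht0, ht1, hpre, hpim⟩ := seg_re_im hp
    refine emU_mem.mpr ⟨?_, ?_⟩
    · rw [hpre, hwre]
      rcases eq_or_lt_of_le ht0 with h | h
      · rw [← h]; simpa using hre
      · nlinarith
    · intro h
      apply him
      have : p.im = z.im := by rw [hpim, hwim]; ring
      rw [h] at this
      simpa using this.symm
  have j2 : JoinedIn emU w 2 := by
    apply JoinedIn.of_segment_subset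
    intro p hp
    obtain ⟨t, ht0, ht1, hpre, hpim⟩ := seg_re_im hp
    have hp2 : p.re = 2 := by rw [hpre, hwre]; norm_num; ring
    refine emU_mem.mpr ⟨by rw [hp2]; norm_num, fun h => by rw [h] at hp2; norm_num at hp2⟩
  exact j1.trans j2

lemma emU_pathConnected : IsPathConnected emU := by
  refine ⟨2, emU_mem.mpr ⟨by norm_num, by norm_num⟩, ?_⟩
  intro z hz
  obtain ⟨hre, hne⟩ := emU_mem.mp hz
  by_cases him : z.im = 0
  · have hre1 : z.re ≠ 1 := by
      intro h
      apply hne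
      apply Complex.ext <;> simp [h, him]
    have j0 : JoinedIn emU z (z + Complex.I) := by
      apply JoinedIn.of_segment_subset
      intro p hp
      obtain ⟨t, ht0, ht1, hpre, hpim⟩ := seg_re_im hp
      have hpre' : p.re = z.re := by rw [hpre]; simp; ring
      refine emU_mem.mpr ⟨by rwa [hpre'], fun h => hre1 (by rw [h] at hpre'; simpa using hpre'.symm)⟩
    have j1 : JoinedIn emU (z + Complex.I) 2 := by
      apply emU_joined_of_im_ne
      · simpa using hre
      · simp [him]
    exact (j0.trans j1).symm
  · exact (emU_joined_of_im_ne hre him).symm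


open MeasureTheory in
/-- For `Re s > 0`, `s ≠ 1`, and `N ≥ 1`, the Riemann zeta function satisfies
`ζ(s) = Σ_{n=1}^{N} n^{-s} + N^{1-s}/(s-1) - (1/2)·N^{-s}
  + s·∫_N^∞ (1/2 - {u})·u^{-s-1} du`. -/
theorem riemannZeta_euler_maclaurin (s : ℂ) (hs : 0 < s.re) (hs1 : s ≠ 1)
    (N : ℕ) (hN : 1 ≤ N) :
    riemannZeta s = ∑ n ∈ Finset.Icc 1 N, (n : ℂ) ^ (-s)
      + (N : ℂ) ^ (1 - s) / (s - 1) - (1 / 2) * (N : ℂ) ^ (-s)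
      + s * ∫ u in Set.Ioi (N : ℝ), ((1 / 2 - Int.fract u : ℝ) : ℂ) * (u : ℂ) ^ (-s - 1) := by
  have hN0 : ((N : ℂ)) ≠ 0 := by
    exact_mod_cast Nat.cast_ne_zero.mpr (by omega)
  have hN1 : (1:ℝ) ≤ (N : ℝ) := by exact_mod_cast hN
  set Φ : ℂ → ℂ := fun z => ∑ n ∈ Finset.Icc 1 N, (n : ℂ) ^ (-z)
      + (N : ℂ) ^ (1 - z) / (z - 1) - (1 / 2) * (N : ℂ) ^ (-z)
      + z * ∫ u in Set.Ioi (N : ℝ), emI z u with hΦ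
  have hzeta_an : AnalyticOnNhd ℂ riemannZeta emU := by
    apply DifferentiableOn.analyticOnNhd _ emU_open
    intro z hz
    exact (differentiableAt_riemannZeta (emU_mem.mp hz).2).differentiableWithinAt
  have hΦ_an : AnalyticOnNhd ℂ Φ emU := by
    apply DifferentiableOn.analyticOnNhd _ emU_open
    intro z hz
    obtain ⟨hz0, hz1⟩ := emU_mem.mp hz
    apply DifferentiableAt.differentiableWithinAt
    refine DifferentiableAt.add (DifferentiableAt.sub (DifferentiableAt.add ?_ ?_) ?_) ?_
    · refine DifferentiableAt.fun_sum (fun n hn => ?_)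
      have hn0 : ((n : ℂ)) ≠ 0 := Nat.cast_ne_zero.mpr (by
        have := (Finset.mem_Icc.mp hn).1; omega)
      exact (differentiable_neg.differentiableAt).const_cpow (Or.inl hn0)
    · refine DifferentiableAt.div ?_ (differentiableAt_id.sub_const 1) (sub_ne_zero.mpr hz1)
      exact ((differentiableAt_const 1).sub differentiableAt_id).const_cpow (Or.inl hN0)
    · exact (differentiableAt_const _).mul
        ((differentiable_neg.differentiableAt).const_cpow (Or.inl hN0))
    · exact differentiableAt_id.mul (emI_int_differentiable hN1 hz0)
  have hev : riemannZeta =ᶠ[𝓝 (2:ℂ)] Φ := by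
    have hopen : IsOpen {z : ℂ | 1 < z.re} := isOpen_lt continuous_const Complex.continuous_re
    refine Filter.eventually_of_mem (hopen.mem_nhds (by norm_num)) (fun z hz => ?_)
    exact em_of_one_lt hz N hN
  have heq := hzeta_an.eqOn_of_preconnected_of_eventuallyEq hΦ_an
    emU_pathConnected.isConnected.isPreconnected
    (emU_mem.mpr ⟨by norm_num, by norm_num⟩) hev
  have := heq (emU_mem.mpr ⟨hs, hs1⟩)
  rw [this]
  rfl
end
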